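/- arXiv:1711.01951 — 3 statements merged into one kernel-verified Lean document; each statement's English description precedes it below -/
import Mathlib

section
/- If S is a locating-dominating set of a graph G, then S is a locating-dominating set of the complement Ḡ if and only if S is a dominating set of Ḡ. -/
/-!
Outside `S`, a vertex sees in `S` under `Gᶜ` exactly the complement (in `S`) of what it sees
under `G`. Taking complements within `S` is injective, so `S` distinguishes the vertices outside
it in `Gᶜ` precisely when it does so in `G`; being locating-dominating in `Gᶜ` thus reduces to
dominating `Gᶜ`.
-/

noncomputable section
open Classical

variable {V : Type*}

/-- `S` is a distinguishing set of `G`. -/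
def IsDistinguishing (G : SimpleGraph V) (S : Set V) : Prop :=
  ∀ u ∉ S, ∀ v ∉ S, u ≠ v → G.neighborSet u ∩ S ≠ G.neighborSet v ∩ S

/-- `S` is a dominating set of `G`. -/
def IsDominating (G : SimpleGraph V) (S : Set V) : Prop :=
  ∀ v ∉ S, ∃ u ∈ S, G.Adj v u

/-- `S` is a locating-dominating set of `G`. -/
def IsLD (G : SimpleGraph V) (S : Set V) : Prop :=
  IsDistinguishing G S ∧ IsDominating G S

/-- The location-domination number of `G`. -/
def ldNum (G : SimpleGraph V) : ℕ :=
  sInf {n | ∃ S : Set V, S.ncard = n ∧ IsLD G S}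

/-- The graph `G^S` associated with a distinguishing set `S`:
vertices outside `S` are adjacent iff their neighborhoods in `S`
differ in exactly one vertex (the label of the edge). -/
def assocGraph (G : SimpleGraph V) (S : Set V) : SimpleGraph V where
  Adj x y := x ∉ S ∧ y ∉ S ∧
    ∃ u, symmDiff (G.neighborSet x ∩ S) (G.neighborSet y ∩ S) = {u}
  symm := by
    constructor
    rintro x y ⟨hx, hy, u, hu⟩
    exact ⟨hy, hx, u, by rwa [symmDiff_comm]⟩
  loopless := by
    constructor
    rintro x ⟨-, -, u, hu⟩
    rw [symmDiff_self] at hu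
    exact (Set.singleton_ne_empty u) (by simpa using hu.symm)

/-- The edge `e` of `G^S` has label `u`. -/
def edgeLabelIs (G : SimpleGraph V) (S : Set V) (u : V) (e : Sym2 V) : Prop :=
  Sym2.lift ⟨fun x y => symmDiff (G.neighborSet x ∩ S) (G.neighborSet y ∩ S) = {u},
    fun x y => by simp only []; rw [symmDiff_comm]⟩ e

/-- The number of edges with label `u` in a list of edges (e.g. of a walk in `G^S`). -/
def labelCount (G : SimpleGraph V) (S : Set V) (u : V) (l : List (Sym2 V)) : ℕ :=
  l.countP fun e => decide (edgeLabelIs G S u e)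

/-- No edge of `H` lies on two distinct cycles: any two cycles sharing an edge
have the same edge set.  (This says precisely that every connected component of
`H` is a cactus.) -/
def NoEdgeOnTwoCycles {α : Type*} (H : SimpleGraph α) : Prop :=
  ∀ (x y : α) (p : H.Walk x x) (q : H.Walk y y), p.IsCycle → q.IsCycle →
    ∀ e ∈ p.edges, e ∈ q.edges → ∀ e', e' ∈ p.edges ↔ e' ∈ q.edges

/-- A cactus is a connected graph in which no edge lies on two distinct cycles. -/
def IsCactus {α : Type*} (H : SimpleGraph α) : Prop :=
  H.Connected ∧ NoEdgeOnTwoCycles H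

/-- `x` and `y` are twins in `G`. -/
def Twins (G : SimpleGraph V) (x y : V) : Prop :=
  G.neighborSet x = G.neighborSet y ∨
    G.neighborSet x ∪ {x} = G.neighborSet y ∪ {y}

/-- `x` and `y` are twins in the vertex-deleted graph `G - u`. -/
def TwinsAvoid (G : SimpleGraph V) (u x y : V) : Prop :=
  G.neighborSet x \ {u} = G.neighborSet y \ {u} ∨
    (G.neighborSet x ∪ {x}) \ {u} = (G.neighborSet y ∪ {y}) \ {u}

/-- `U, W` is a bipartition of `G` into two stable (independent) sets. -/
def BipartitionOf (G : SimpleGraph V) (U W : Set V) : Prop :=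
  U ∪ W = Set.univ ∧ Disjoint U W ∧
    (∀ x ∈ U, ∀ y ∈ U, ¬ G.Adj x y) ∧ (∀ x ∈ W, ∀ y ∈ W, ¬ G.Adj x y)

theorem compl_neighborSet_inter_of_notMem {G : SimpleGraph V} {S : Set V} {v : V}
    (hv : v ∉ S) : Gᶜ.neighborSet v ∩ S = S \ G.neighborSet v := by
  ext w
  simp only [SimpleGraph.neighborSet_compl, Set.mem_inter_iff, Set.mem_sdiff, Set.mem_compl_iff,
    Set.mem_singleton_iff]
  exact ⟨fun ⟨⟨hG, _⟩, hw⟩ => ⟨hw, hG⟩, fun ⟨hw, hG⟩ => ⟨⟨hG, by rintro rfl; exact hv hw⟩, hw⟩⟩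

theorem isDistinguishing_compl_iff {G : SimpleGraph V} {S : Set V} :
    IsDistinguishing Gᶜ S ↔ IsDistinguishing G S := by
  have trace_compl_inj : ∀ u ∉ S, ∀ v ∉ S,
      (Gᶜ.neighborSet u ∩ S = Gᶜ.neighborSet v ∩ S ↔
        G.neighborSet u ∩ S = G.neighborSet v ∩ S) := by
    intro u hu v hv
    rw [compl_neighborSet_inter_of_notMem hu, compl_neighborSet_inter_of_notMem hv,
      Set.inter_comm _ S, Set.inter_comm _ S]
    exact sdiff_eq_sdiff_iff_inf_eq_inf
  exact forall₂_congr fun u hu => forall₂_congr fun v hv =>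
    imp_congr_right fun _ => not_congr (trace_compl_inj u hu v hv)

theorem ld_compl_iff_dominating_compl (G : SimpleGraph V) (S : Set V)
    (h : IsLD G S) : IsLD Gᶜ S ↔ IsDominating Gᶜ S :=
  ⟨And.right, fun hdom => ⟨isDistinguishing_compl_iff.2 h.1, hdom⟩⟩

end
end

section
/- For every finite graph G on at least 2 vertices, the location-domination numbers of G and of its complement differ by at most 1: |λ(G) − λ(Ḡ)| ≤ 1. -/
noncomputable section
open Classical

variable {V : Type*}

/-! A locating-dominating set `S` of `G` is still distinguishing in `Gᶜ`, since for `u ∉ S` the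
trace of `u` on `S` in `Gᶜ` is the complement in `S` of its trace in `G`. It can only fail to
dominate in `Gᶜ` at a vertex adjacent in `G` to all of `S`, and being distinguishing, `S` admits at
most one such vertex; adding it gives a locating-dominating set of `Gᶜ`. Hence
`ldNum Gᶜ ≤ ldNum G + 1`, and symmetrically. -/

lemma compl_neighborSet_inter {G : SimpleGraph V} {S : Set V} {u : V} (hu : u ∉ S) :
    Gᶜ.neighborSet u ∩ S = S \ (G.neighborSet u ∩ S) := by
  ext x
  simp only [Set.mem_inter_iff, SimpleGraph.mem_neighborSet, SimpleGraph.compl_adj,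
    Set.mem_sdiff]
  exact ⟨fun ⟨⟨_, hna⟩, hx⟩ => ⟨hx, fun h => hna h.1⟩,
    fun ⟨hx, hna⟩ => ⟨⟨fun h => hu (h ▸ hx), fun h => hna ⟨h, hx⟩⟩, hx⟩⟩

namespace IsDistinguishing

variable {G : SimpleGraph V} {S : Set V}

lemma compl (hS : IsDistinguishing G S) : IsDistinguishing Gᶜ S := by
  intro u hu v hv huv heq
  apply hS u hu v hv huv
  rw [compl_neighborSet_inter hu, compl_neighborSet_inter hv] at heq
  rw [← Set.sdiff_sdiff_cancel_left Set.inter_subset_right, heq,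
    Set.sdiff_sdiff_cancel_left Set.inter_subset_right]

lemma mono {T : Set V} (hS : IsDistinguishing G S) (hST : S ⊆ T) : IsDistinguishing G T := by
  intro u hu v hv huv heq
  apply hS u (fun h => hu (hST h)) v (fun h => hv (hST h)) huv
  rw [← Set.inter_eq_right.mpr hST, ← Set.inter_assoc, ← Set.inter_assoc, heq]

lemma subsingleton_setOf_subset_neighborSet (hS : IsDistinguishing G S) :
    {v | v ∉ S ∧ S ⊆ G.neighborSet v}.Subsingleton := by
  rintro u ⟨hu, huS⟩ v ⟨hv, hvS⟩
  by_contra huv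
  exact hS u hu v hv huv <| by
    rw [Set.inter_eq_right.mpr huS, Set.inter_eq_right.mpr hvS]

end IsDistinguishing

lemma IsLD.exists_isLD_compl {G : SimpleGraph V} {S : Set V} (hS : IsLD G S) :
    ∃ T : Set V, T.ncard ≤ S.ncard + 1 ∧ IsLD Gᶜ T := by
  set A := {v | v ∉ S ∧ S ⊆ G.neighborSet v}
  have hA : A.Subsingleton := hS.1.subsingleton_setOf_subset_neighborSet
  refine ⟨S ∪ A, (Set.ncard_union_le S A).trans (by grw [(Set.ncard_le_one hA.finite).2 hA]),
    hS.1.compl.mono Set.subset_union_left, ?_⟩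
  intro w hw
  have hwS : w ∉ S := fun h => hw (Set.mem_union_left A h)
  obtain ⟨u, huS, hwu⟩ := Set.not_subset.mp fun h => hw (Set.mem_union_right S ⟨hwS, h⟩)
  exact ⟨u, Set.mem_union_left A huS, fun h => hwS (h ▸ huS), hwu⟩

lemma isLD_univ (G : SimpleGraph V) : IsLD G Set.univ :=
  ⟨fun u hu => absurd (Set.mem_univ u) hu, fun u hu => absurd (Set.mem_univ u) hu⟩

lemma exists_isLD_ncard_eq_ldNum (G : SimpleGraph V) :
    ∃ S : Set V, S.ncard = ldNum G ∧ IsLD G S :=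
  Nat.sInf_mem (s := {n | ∃ S : Set V, S.ncard = n ∧ IsLD G S}) ⟨_, Set.univ, rfl, isLD_univ G⟩

lemma ldNum_le_ncard {G : SimpleGraph V} {S : Set V} (hS : IsLD G S) : ldNum G ≤ S.ncard :=
  Nat.sInf_le ⟨S, rfl, hS⟩

lemma ldNum_compl_le (G : SimpleGraph V) : ldNum Gᶜ ≤ ldNum G + 1 := by
  obtain ⟨S, hS, hSLD⟩ := exists_isLD_ncard_eq_ldNum G
  obtain ⟨T, hT, hTLD⟩ := hSLD.exists_isLD_compl
  exact (ldNum_le_ncard hTLD).trans (hS ▸ hT)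

theorem ldNum_compl_diff_le_one_general (G : SimpleGraph V) :
    |(ldNum G : ℤ) - (ldNum Gᶜ : ℤ)| ≤ 1 := by
  have h₁ := ldNum_compl_le G
  have h₂ := ldNum_compl_le Gᶜ
  rw [compl_compl] at h₂
  rw [abs_le]
  omega

theorem ldNum_compl_diff_le_one [Fintype V] (G : SimpleGraph V)
    (h : 2 ≤ Fintype.card V) :
    |(ldNum G : ℤ) - (ldNum Gᶜ : ℤ)| ≤ 1 :=
  ldNum_compl_diff_le_one_general G

end
end

section
/- Let S be a distinguishing set of a graph G and let ρ be a walk in the associated graph G^S with no repeated edges. If for every v ∈ S the walk ρ traverses an even number of edges labeled v, then ρ is a closed walk (its endpoints coincide). -/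
noncomputable section
open Classical

variable {V : Type*}

/-! An edge of `G^S` labelled `u` changes the trace `N(·) ∩ S` exactly at `u`. Along a walk,
`v ∈ S` therefore lies in exactly one of the traces of the endpoints iff the walk uses an odd
number of edges labelled `v`. With all counts even the endpoints have the same trace, and since
both lie outside `S` (they are endpoints of edges of `G^S` unless the walk is trivial), the
distinguishing property forces them to coincide. -/

theorem Set.mem_iff_mem_iff_ne_of_symmDiff_eq_singleton {α : Type*} {A B : Set α} {u : α}
    (h : symmDiff A B = {u}) (v : α) : (v ∈ A ↔ v ∈ B) ↔ v ≠ u := by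
  have hv := congrArg (v ∈ ·) h
  simp only [Set.mem_symmDiff, Set.mem_singleton_iff, eq_iff_iff] at hv
  rw [ne_eq, ← hv]
  tauto

theorem labelCount_cons (G : SimpleGraph V) (S : Set V) (v : V) (e : Sym2 V)
    (l : List (Sym2 V)) :
    labelCount G S v (e :: l) = labelCount G S v l + if edgeLabelIs G S v e then 1 else 0 := by
  simp [labelCount, List.countP_cons]

namespace assocGraph

variable {G : SimpleGraph V} {S : Set V}

theorem edgeLabelIs_iff_of_symmDiff_eq_singleton {a b u : V}
    (hu : symmDiff (G.neighborSet a ∩ S) (G.neighborSet b ∩ S) = {u}) (v : V) :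
    edgeLabelIs G S v s(a, b) ↔ v = u := by
  change symmDiff _ _ = {v} ↔ v = u
  rw [hu, Set.singleton_eq_singleton_iff, eq_comm]

theorem even_labelCount_iff {x y : V} (p : (assocGraph G S).Walk x y) (v : V) :
    Even (labelCount G S v p.edges) ↔
      (v ∈ G.neighborSet x ∩ S ↔ v ∈ G.neighborSet y ∩ S) := by
  induction p with
  | nil => simp [labelCount]
  | @cons a b c hab q ih =>
    rw [SimpleGraph.Walk.edges_cons]
    obtain ⟨-, -, u, hu⟩ := hab
    have hstep := Set.mem_iff_mem_iff_ne_of_symmDiff_eq_singleton hu v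
    simp only [labelCount_cons, edgeLabelIs_iff_of_symmDiff_eq_singleton hu]
    by_cases hvu : v = u
    · rw [if_pos hvu, Nat.even_add_one, ih]
      have : ¬(_ ↔ _) := fun h => hstep.mp h hvu
      tauto
    · rw [if_neg hvu, add_zero, ih]
      have := hstep.mpr hvu
      tauto

theorem start_not_mem_of_ne {x y : V} (p : (assocGraph G S).Walk x y) (hxy : x ≠ y) : x ∉ S := by
  cases p with
  | nil => exact absurd rfl hxy
  | cons hab _ => exact hab.1

end assocGraph

theorem trail_even_labels_closed_general (G : SimpleGraph V) (S : Set V)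
    (h : IsDistinguishing G S) (x y : V)
    (p : (assocGraph G S).Walk x y)
    (heven : ∀ v ∈ S, Even (labelCount G S v p.edges)) :
    x = y := by
  by_contra hxy
  have hx : x ∉ S := assocGraph.start_not_mem_of_ne p hxy
  have hy : y ∉ S := assocGraph.start_not_mem_of_ne p.reverse (Ne.symm hxy)
  refine h x hx y hy hxy (Set.ext fun v => ?_)
  by_cases hv : v ∈ S
  · exact (assocGraph.even_labelCount_iff p v).mp (heven v hv)
  · simp [hv]

theorem trail_even_labels_closed (G : SimpleGraph V) (S : Set V)
    (h : IsDistinguishing G S) (x y : V)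
    (p : (assocGraph G S).Walk x y) (hp : p.IsTrail)
    (heven : ∀ v ∈ S, Even (labelCount G S v p.edges)) :
    x = y :=
  trail_even_labels_closed_general G S h x y p heven

end
end
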